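/- Feedback step of the equivalence of semantics: let M' be a well-formed modular system in MS(σ',ε') with M'^mt = M'^op, and let R ∈ σ', S ∈ ε' be symbols of the same type and arity. Then the feedback M'[R=S] ∈ MS(σ'∖{R}, ε'∪{R}) satisfies (M'[R=S])^mt = (M'[R=S])^op. -/
import Mathlib


universe u

/-- Well-formed modular systems over a universal vocabulary `τ` consisting of all
symbols of type `Symb`, with interpretations in `Val`; `MS Symb Val σ ε` is the type
of well-formed modular systems with input (instance) vocabulary `σ` and output
(expansion) vocabulary `ε`, built from primitive modules by projection, sequential
composition, union and feedback. -/
inductive MS (Symb Val : Type u) : Set Symb → Set Symb → Type u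
  | prim (σ ε : Set Symb) (hdisj : Disjoint σ ε)
      (S : Set (Symb → Val))
      (hS : ∀ B B' : Symb → Val, Set.EqOn B B' (σ ∪ ε) → (B ∈ S ↔ B' ∈ S)) :
      MS Symb Val σ ε
  | proj {σ ε : Set Symb} (ν : Set Symb) (hν : ν ⊆ σ ∪ ε)
      (M : MS Symb Val σ ε) : MS Symb Val (σ ∩ ν) (ε ∩ ν)
  | comp {σ1 ε1 σ2 ε2 : Set Symb}
      (hcomposable : Disjoint ε1 ε2) (hindep : Disjoint σ1 ε2)
      (M1 : MS Symb Val σ1 ε1) (M2 : MS Symb Val σ2 ε2) :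
      MS Symb Val (σ1 ∪ (σ2 \ ε1)) (ε1 ∪ ε2)
  | union {σ1 ε1 σ2 ε2 : Set Symb}
      (h12 : Disjoint σ1 ε2) (h21 : Disjoint σ2 ε1)
      (M1 : MS Symb Val σ1 ε1) (M2 : MS Symb Val σ2 ε2) :
      MS Symb Val (σ1 ∪ σ2) (ε1 ∪ ε2)
  | feedback {σ ε : Set Symb} (R S : Symb) (hR : R ∈ σ) (hS : S ∈ ε)
      (M : MS Symb Val σ ε) : MS Symb Val (σ \ {R}) (ε ∪ {R})

variable {Symb Val : Type u}

/-- Model-theoretic semantics `M^mt`: the set of `(σ ∪ ε)`-structures that are models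
of `M`.  Structures are represented as total functions `Symb → Val`, and a set of
`(σ ∪ ε)`-structures is represented by the set of all total functions whose
restriction to `σ ∪ ε` is one of those structures. -/
def MS.mt : ∀ {σ ε : Set Symb}, MS Symb Val σ ε → Set (Symb → Val)
  | _, _, .prim σ ε _ S _ => {B | ∃ B' ∈ S, Set.EqOn B B' (σ ∪ ε)}
  | _, _, .proj ν _ M => {B | ∃ B' ∈ M.mt, Set.EqOn B' B ν}
  | _, _, .comp _ _ M1 M2 => M1.mt ∩ M2.mt
  | _, _, .union _ _ M1 M2 => M1.mt ∪ M2.mt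
  | _, _, .feedback R S _ _ M => {B | B ∈ M.mt ∧ B R = B S}

/-- The transition relation `(M, B1) ⟶ B2` of the structural operational semantics,
on `τ`-states (total functions `Symb → Val`). -/
def MS.trans : ∀ {σ ε : Set Symb}, MS Symb Val σ ε → (Symb → Val) → (Symb → Val) → Prop
  | _, _, .prim σ ε _ S _, B1, B2 =>
      (∃ B' ∈ S, Set.EqOn B2 B' (σ ∪ ε)) ∧ Set.EqOn B2 B1 εᶜ
  | _, _, @MS.proj _ _ _ ε' ν _ M, B1, B2 =>
      ∃ B1' B2' : Symb → Val, Set.EqOn B1' B1 ν ∧ Set.EqOn B2' B2 ν ∧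
        M.trans B1' B2' ∧ Set.EqOn B2 B1 (ε' ∩ ν)ᶜ
  | _, _, .comp _ _ M1 M2, B1, B2 => ∃ B', M1.trans B1 B' ∧ M2.trans B' B2
  | _, _, .union _ _ M1 M2, B1, B2 => M1.trans B1 B2 ∨ M2.trans B1 B2
  | _, _, .feedback R S _ _ M, B1, B2 => M.trans B1 B2 ∧ B1 R = B2 S

/-- Operational semantics `M^op`: the set of `(σ ∪ ε)`-structures `B` for which there
are `τ`-states `B1`, `B2` with `(M, B1) ⟶ B2`, `B|_σ = B1|_σ` and `B|_ε = B2|_ε`. -/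
def MS.op {σ ε : Set Symb} (M : MS Symb Val σ ε) : Set (Symb → Val) :=
  {B | ∃ B1 B2 : Symb → Val, M.trans B1 B2 ∧ Set.EqOn B B1 σ ∧ Set.EqOn B B2 ε}

lemma MS.disjoint_io : ∀ {σ ε : Set Symb} (_ : MS Symb Val σ ε), Disjoint σ ε := by
  intro σ ε M
  induction M with
  | prim _ _ h _ _ => exact h
  | proj ν hν M ih => exact ih.mono inf_le_left inf_le_left
  | comp hc hi M1 M2 ih1 ih2 =>
      rw [Set.disjoint_left] at *
      rintro x (hx | ⟨hx, hx'⟩) (hy | hy)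
      · exact ih1 hx hy
      · exact hi hx hy
      · exact hx' hy
      · exact ih2 hx hy
  | union h12 h21 M1 M2 ih1 ih2 =>
      rw [Set.disjoint_left] at *
      rintro x (hx | hx) (hy | hy)
      · exact ih1 hx hy
      · exact h12 hx hy
      · exact h21 hx hy
      · exact ih2 hx hy
  | feedback R S hR hS M ih =>
      rw [Set.disjoint_left] at *
      rintro x ⟨hx, hx'⟩ (hy | hy)
      · exact ih hx hy
      · exact hx' hy

lemma MS.inertia : ∀ {σ ε : Set Symb} (M : MS Symb Val σ ε) {B1 B2 : Symb → Val},
    M.trans B1 B2 → Set.EqOn B2 B1 εᶜ := by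
  intro σ ε M
  induction M with
  | prim σ ε h S hS => exact fun h' => h'.2
  | proj ν hν M ih => rintro B1 B2 ⟨B1', B2', _, _, _, h4⟩; exact h4
  | comp hc hi M1 M2 ih1 ih2 =>
      rintro B1 B2 ⟨B', h1, h2⟩ x hx
      simp only [Set.mem_compl_iff, Set.mem_union, not_or] at hx
      exact (ih2 h2 hx.2).trans (ih1 h1 hx.1)
  | union h12 h21 M1 M2 ih1 ih2 =>
      rintro B1 B2 (h | h) x hx <;>
        simp only [Set.mem_compl_iff, Set.mem_union, not_or] at hx
      · exact ih1 h hx.1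
      · exact ih2 h hx.2
  | feedback R S hR hS M ih =>
      rintro B1 B2 ⟨h1, _⟩ x hx
      simp only [Set.mem_compl_iff, Set.mem_union, not_or] at hx
      exact ih h1 hx.1

/-- Feedback step of the equivalence of semantics: if `M'` is a
well-formed modular system in `MS(σ', ε')` with `M'^mt = M'^op`, `R ∈ σ'` and
`S ∈ ε'`, then the feedback `M'[R = S] ∈ MS(σ' ∖ {R}, ε' ∪ {R})` satisfies
`(M'[R = S])^mt = (M'[R = S])^op`. -/
theorem mt_eq_op_feedback {σ' ε' : Set Symb} (M' : MS Symb Val σ' ε')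
    (R S : Symb) (hR : R ∈ σ') (hS : S ∈ ε') (h : M'.mt = M'.op) :
    (MS.feedback R S hR hS M').mt = (MS.feedback R S hR hS M').op := by
  have hRε : R ∉ ε' := fun hRε => (M'.disjoint_io).le_bot ⟨hR, hRε⟩
  ext B
  constructor
  · rintro ⟨hBmt, hBRS⟩
    rw [h] at hBmt
    obtain ⟨B1, B2, htr, hσ, hε⟩ := hBmt
    refine ⟨B1, B2, ⟨htr, ?_⟩, fun x hx => hσ hx.1, ?_⟩
    · rw [← hσ hR, hBRS, hε hS]
    · rintro x (hx | hx)
      · exact hε hx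
      · rw [Set.mem_singleton_iff] at hx; subst hx
        rw [M'.inertia htr hRε, ← hσ hR]
  · rintro ⟨B1, B2, ⟨htr, hRS⟩, hσ, hε⟩
    have hBR : B R = B1 R := by
      rw [hε (Or.inr rfl), M'.inertia htr hRε]
    constructor
    · rw [h]
      refine ⟨B1, B2, htr, ?_, fun x hx => hε (Or.inl hx)⟩
      intro x hx
      by_cases hxR : x = R
      · subst hxR; exact hBR
      · exact hσ ⟨hx, hxR⟩
    · rw [hBR, hRS, ← hε (Or.inl hS)]
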